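/- arXiv:2304.00232 — 2 statements merged into one kernel-verified Lean document; each statement's English description precedes it below -/
import Mathlib

section
/- For a sequence x_s,...,x_t with values in {1,...,O}, the product of successive Laplace predictor values equals (O-1)! times the product over o of (count of o in the sequence)! divided by the product over i from 1 to O-1 of (n+i) times n!, where n = t-s+1 is the sequence length. Formally, ∏_{s'=s}^{t} (Σ_{i=s}^{s'-1} 1[x_i = x_{s'}] + 1)/((s'-s) + O) = (O-1)! · (∏_{o=1}^{O} Σ_o!) / ((∏_{i=1}^{O-1}(n+i)) · n!), where Σ_o is the number of indices j in [s,t] with x_j = o. -/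
lemma fact_helper (n k : ℕ) :
    (∏ i ∈ Finset.Icc 1 k, (n + i)) * n.factorial = (n + k).factorial := by
  induction k with
  | zero => simp
  | succ k ih =>
    rw [Finset.prod_Icc_succ_top (by omega : 1 ≤ k + 1)]
    have : n + (k+1) = (n + k) + 1 := by omega
    rw [this, Nat.factorial_succ, ← ih]
    ring

lemma fact_helper_real (n k : ℕ) :
    (∏ i ∈ Finset.Icc 1 k, ((n : ℝ) + i)) * (n.factorial : ℝ) = ((n + k).factorial : ℝ) := by
  rw [← fact_helper n k]
  push_cast
  ring

/-- Closed form for the product of successive Laplace predictor values over a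
sequence `x_s, ..., x_t` with values in an alphabet of size `O`. -/
theorem laplace_product_closed_form (O : ℕ) (hO : 1 ≤ O) (s t : ℕ) (hst : s ≤ t)
    (x : ℕ → Fin O) :
    (∏ s' ∈ Finset.Icc s t,
      ((((Finset.Ico s s').filter (fun i => x i = x s')).card + 1 : ℝ) /
        (((s' - s : ℕ) : ℝ) + O)))
    = (Nat.factorial (O - 1) : ℝ) *
        (∏ o : Fin O,
          (Nat.factorial (((Finset.Icc s t).filter (fun j => x j = o)).card) : ℝ)) /
        ((∏ i ∈ Finset.Icc 1 (O - 1), (((t - s + 1 : ℕ) : ℝ) + i)) *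
          (Nat.factorial (t - s + 1) : ℝ)) := by
  induction t, hst using Nat.le_induction with
  | base =>
    have h1 : s - s + 1 = 1 := by omega
    have hfil : ∀ o : Fin O,
        (Nat.factorial (((Finset.Icc s s).filter (fun j => x j = o)).card) : ℝ) = 1 := by
      intro o
      rw [Finset.Icc_self, Finset.filter_singleton]
      split <;> simp
    have hD := fact_helper_real 1 (O - 1)
    have h2 : 1 + (O - 1) = O := by omega
    rw [h2] at hD
    rw [h1, Finset.prod_congr rfl (fun o _ => hfil o), Finset.prod_const_one,
      Finset.Icc_self, Finset.prod_singleton, Finset.Ico_self, Finset.filter_empty]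
    push_cast at hD ⊢
    rw [hD]
    have hOfact : (O.factorial : ℝ) = O * (O - 1).factorial := by
      rw [← Nat.mul_factorial_pred (by omega : O ≠ 0)]
      push_cast
      ring
    rw [hOfact]
    have h4 : (0 : ℝ) < (O : ℝ) := by positivity
    have h3 : ((O - 1).factorial : ℝ) ≠ 0 := by positivity
    rw [Nat.sub_self]
    push_cast
    field_simp
    simp
  | succ t ht ih =>
    rw [Finset.prod_Icc_succ_top (by omega : s ≤ t + 1), ih]
    have hIco : Finset.Ico s (t + 1) = Finset.Icc s t := by rw [Finset.Ico_add_one_right_eq_Icc]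
    rw [hIco]
    set c := ((Finset.Icc s t).filter (fun i => x i = x (t + 1))).card with hc
    have hins : Finset.Icc s (t + 1) = insert (t + 1) (Finset.Icc s t) := by
      ext a; simp only [Finset.mem_Icc, Finset.mem_insert]; omega
    have hcard : ∀ o : Fin O, ((Finset.Icc s (t + 1)).filter (fun j => x j = o)).card
        = ((Finset.Icc s t).filter (fun j => x j = o)).card + (if x (t + 1) = o then 1 else 0) := by
      intro o
      rw [hins, Finset.filter_insert]
      split
      · rw [Finset.card_insert_of_notMem (by simp)]
      · simp
    have hprod : (∏ o : Fin O,
          (Nat.factorial (((Finset.Icc s (t + 1)).filter (fun j => x j = o)).card) : ℝ))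
        = ((c : ℝ) + 1) * ∏ o : Fin O,
          (Nat.factorial (((Finset.Icc s t).filter (fun j => x j = o)).card) : ℝ) := by
      rw [Finset.prod_eq_mul_prod_sdiff_singleton_of_mem (Finset.mem_univ (x (t + 1))),
        Finset.prod_eq_mul_prod_sdiff_singleton_of_mem (Finset.mem_univ (x (t + 1)))
          (fun o => (Nat.factorial (((Finset.Icc s t).filter (fun j => x j = o)).card) : ℝ))]
      have he : ∀ o ∈ Finset.univ \ {x (t + 1)},
          (Nat.factorial (((Finset.Icc s (t + 1)).filter (fun j => x j = o)).card) : ℝ)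
          = (Nat.factorial (((Finset.Icc s t).filter (fun j => x j = o)).card) : ℝ) := by
        intro o ho
        rw [hcard o, if_neg (by simp at ho; exact fun h => ho h.symm), Nat.add_zero]
      rw [Finset.prod_congr rfl he, hcard (x (t + 1)), if_pos rfl, Nat.factorial_succ]
      push_cast
      ring
    rw [hprod]
    have hn1 : t + 1 - s + 1 = t - s + 1 + 1 := by omega
    have hsub : t + 1 - s = t - s + 1 := by omega
    rw [hn1, hsub]
    have hD1 := fact_helper_real (t - s + 1) (O - 1)
    have hD2 := fact_helper_real (t - s + 1 + 1) (O - 1)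
    rw [hD1, hD2]
    have hkey : (((t - s + 1 + 1) + (O - 1)).factorial : ℝ)
        = (((t - s + 1 : ℕ) : ℝ) + O) * (((t - s + 1) + (O - 1)).factorial : ℝ) := by
      have h : t - s + 1 + 1 + (O - 1) = (t - s + 1 + (O - 1)) + 1 := by omega
      rw [h, Nat.factorial_succ]
      push_cast [Nat.cast_sub hO]
      ring
    rw [hkey]
    have hpos : (0 : ℝ) < (((t - s + 1) + (O - 1)).factorial : ℝ) := by positivity
    have hpos2 : (0 : ℝ) < ((t - s + 1 : ℕ) : ℝ) + O := by positivity
    field_simp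
end

section
/- Cumulative loss upper bound: for a sequence x_s,...,x_t ∈ {1,...,O} of length n = t−s+1 with empirical counts Σ_o and empirical frequencies μ̂_o = Σ_o/n, and for any probability vector θ with strictly positive entries, the cumulative Laplace forecaster loss L = log((n+O−1)!) − Σ_o log(Σ_o!) − log((O−1)!) satisfies L ≤ Σ_{i=1}^{O−1} log(n+i) − Σ_{o=1}^{O} Σ_o·log θ_o − n·KL(μ̂ ∥ θ) − log((O−1)!), and in particular L ≤ Σ_{i=1}^{O−1} log(n+i) − Σ_{o=1}^{O} Σ_o·log θ_o − log((O−1)!). -/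
open Finset Real

/-- Multinomial key inequality: `n! * ∏ pₒ^{Sₒ} ≤ ∏ Sₒ!` for a subprobability vector `p`. -/
lemma key_mul (O n : ℕ) (S : Fin O → ℕ) (hsum : ∑ o, S o = n)
    (p : Fin O → ℝ) (hp : ∀ o, 0 ≤ p o) (hps : ∑ o, p o = 1) :
    (Nat.factorial n : ℝ) * ∏ o, p o ^ S o ≤ ∏ o, (Nat.factorial (S o) : ℝ) := by
  have hmem : S ∈ piAntidiag (univ : Finset (Fin O)) n := by
    simp [mem_piAntidiag, hsum]
  have hterm : (Nat.multinomial univ S : ℝ) * ∏ o, p o ^ S o ≤ 1 := by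
    calc (Nat.multinomial univ S : ℝ) * ∏ o, p o ^ S o
        ≤ ∑ k ∈ piAntidiag (univ : Finset (Fin O)) n,
            (Nat.multinomial univ k : ℝ) * ∏ o, p o ^ k o := by
          refine Finset.single_le_sum (f := fun k => (Nat.multinomial univ k : ℝ) * ∏ o, p o ^ k o) (fun k _ => ?_) hmem
          exact mul_nonneg (Nat.cast_nonneg _) (Finset.prod_nonneg fun o _ => pow_nonneg (hp o) _)
      _ = 1 := by rw [← Finset.sum_pow_eq_sum_piAntidiag, hps, one_pow]
  have hspec : (∏ o, (Nat.factorial (S o) : ℝ)) * (Nat.multinomial univ S : ℝ)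
      = (Nat.factorial n : ℝ) := by
    rw [← Nat.cast_prod, ← Nat.cast_mul, Nat.multinomial_spec, hsum]
  calc (Nat.factorial n : ℝ) * ∏ o, p o ^ S o
      = (∏ o, (Nat.factorial (S o) : ℝ)) * ((Nat.multinomial univ S : ℝ) * ∏ o, p o ^ S o) := by
        rw [← mul_assoc, hspec]
    _ ≤ (∏ o, (Nat.factorial (S o) : ℝ)) * 1 := by
        refine mul_le_mul_of_nonneg_left hterm (by positivity)
    _ = _ := mul_one _

lemma key_log (O n : ℕ) (S : Fin O → ℕ) (hsum : ∑ o, S o = n)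
    (p : Fin O → ℝ) (hp : ∀ o, 0 ≤ p o) (hps : ∑ o, p o = 1)
    (hpos : ∀ o, S o ≠ 0 → 0 < p o) :
    Real.log (Nat.factorial n) + ∑ o, (S o : ℝ) * Real.log (p o)
      ≤ ∑ o, Real.log (Nat.factorial (S o)) := by
  have hfac : ∀ o, 0 < p o ^ S o := by
    intro o
    rcases Nat.eq_zero_or_pos (S o) with h | h
    · simp [h]
    · exact pow_pos (hpos o h.ne') _
  have hprodpos : 0 < ∏ o, p o ^ S o := Finset.prod_pos fun o _ => hfac o
  have h1 : 0 < (Nat.factorial n : ℝ) * ∏ o, p o ^ S o := by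
    positivity
  have := Real.log_le_log h1 (key_mul O n S hsum p hp hps)
  rw [Real.log_mul (by positivity) hprodpos.ne', Real.log_prod (fun o _ => (hfac o).ne')] at this
  rw [Real.log_prod (fun o _ => Nat.cast_ne_zero.mpr (Nat.factorial_ne_zero _))] at this
  simpa [Real.log_pow] using this

lemma fact_add_prod (n m : ℕ) :
    Nat.factorial (n + m) = Nat.factorial n * ∏ i ∈ Icc 1 m, (n + i) := by
  induction m with
  | zero => simp
  | succ m ih =>
      rw [Finset.prod_Icc_succ_top (Nat.le_add_left 1 m), ← mul_assoc, ← ih,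
        ← Nat.add_assoc, Nat.factorial_succ]
      ring

lemma log_fact_add (n m : ℕ) (hn : 1 ≤ n) :
    Real.log (Nat.factorial (n + m))
      = Real.log (Nat.factorial n) + ∑ i ∈ Icc 1 m, Real.log ((n : ℝ) + i) := by
  have h : ((Nat.factorial (n + m) : ℝ)) = (Nat.factorial n : ℝ) * ∏ i ∈ Icc 1 m, ((n : ℝ) + i) := by
    rw [fact_add_prod]; push_cast; ring
  have hne : ∀ i ∈ Icc 1 m, ((n : ℝ) + i) ≠ 0 := by
    intro i _
    positivity
  rw [h, Real.log_mul (Nat.cast_ne_zero.mpr (Nat.factorial_ne_zero _))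
    (Finset.prod_ne_zero_iff.mpr hne), Real.log_prod hne]

/-- Cumulative Laplace forecaster loss upper bound, with and without the KL term. -/
theorem cumulative_loss_upper_bound (O n : ℕ) (hO : 1 ≤ O) (hn : 1 ≤ n)
    (S : Fin O → ℕ) (hsum : ∑ o, S o = n)
    (θ : Fin O → ℝ) (hθ : ∀ o, 0 < θ o) (hθs : ∑ o, θ o = 1) :
    (Real.log (Nat.factorial (n + O - 1)) - ∑ o, Real.log (Nat.factorial (S o))
        - Real.log (Nat.factorial (O - 1))
      ≤ ∑ i ∈ Finset.Icc 1 (O - 1), Real.log ((n : ℝ) + i)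
          - ∑ o, (S o : ℝ) * Real.log (θ o)
          - (n : ℝ) * ∑ o, ((S o : ℝ) / n) * Real.log (((S o : ℝ) / n) / θ o)
          - Real.log (Nat.factorial (O - 1))) ∧
    (Real.log (Nat.factorial (n + O - 1)) - ∑ o, Real.log (Nat.factorial (S o))
        - Real.log (Nat.factorial (O - 1))
      ≤ ∑ i ∈ Finset.Icc 1 (O - 1), Real.log ((n : ℝ) + i)
          - ∑ o, (S o : ℝ) * Real.log (θ o)
          - Real.log (Nat.factorial (O - 1))) := by
  have hnpos : (0 : ℝ) < n := by exact_mod_cast hn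
  have hB : Real.log (Nat.factorial (n + O - 1))
      = Real.log (Nat.factorial n) + ∑ i ∈ Icc 1 (O - 1), Real.log ((n : ℝ) + i) := by
    have : n + O - 1 = n + (O - 1) := by omega
    rw [this, log_fact_add n (O - 1) hn]
  -- key with θ
  have h2 := key_log O n S hsum θ (fun o => (hθ o).le) hθs (fun o _ => hθ o)
  -- key with empirical frequencies
  have hμs : ∑ o, (S o : ℝ) / n = 1 := by
    rw [← Finset.sum_div]
    rw [show ∑ o, (S o : ℝ) = (n : ℝ) by exact_mod_cast congrArg Nat.cast hsum]
    exact div_self hnpos.ne'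
  have h1 := key_log O n S hsum (fun o => (S o : ℝ) / n)
    (fun o => by positivity) hμs
    (fun o h => div_pos (by exact_mod_cast Nat.pos_of_ne_zero h) hnpos)
  -- identity A
  have hA : ∑ o, (S o : ℝ) * Real.log (θ o)
      + (n : ℝ) * ∑ o, ((S o : ℝ) / n) * Real.log (((S o : ℝ) / n) / θ o)
      = ∑ o, (S o : ℝ) * Real.log ((S o : ℝ) / n) := by
    rw [Finset.mul_sum, ← Finset.sum_add_distrib]
    refine Finset.sum_congr rfl fun o _ => ?_
    rcases Nat.eq_zero_or_pos (S o) with h | h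
    · simp [h]
    · have hS : (0 : ℝ) < S o := by exact_mod_cast h
      rw [Real.log_div (by positivity) (hθ o).ne']
      field_simp
      ring
  constructor
  · simp only [hB] at *
    linarith [h1]
  · simp only [hB] at *
    linarith [h2]
end
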